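/- Suppose n storage objects each hold one block with at most one label, and suppose at some time there exist: (a) a family of m pairwise disjoint label sets, each of size at least τ − 1 (the permanent values), and (b) an additional label set, disjoint from all of the former, of size at least 2τ − 1 (the blocks of the last two writes). Then n ≥ τ + (τ − 1)(m + 1). -/
import Mathlib


/-- Suppose `n` storage objects each hold one block with at most one label
(`f o` is the optional label of object `o`), and there exist `m` pairwise disjoint label
sets each of size at least `τ − 1` (the permanent values), and an additional label set
`Bset`, disjoint from all of them, of size at least `2τ − 1` (the blocks of the last two
writes), all of whose labels are stored. Then `n ≥ τ + (τ − 1)(m + 1)`. -/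
theorem stmt_12 {Label : Type*} [DecidableEq Label] (n m τ : ℕ) (hτ : 1 ≤ τ)
    (f : Fin n → Option Label)
    (A : Fin m → Finset Label) (Bset : Finset Label)
    (hdisj : ∀ i j : Fin m, i ≠ j → Disjoint (A i) (A j))
    (hdisjB : ∀ i : Fin m, Disjoint (A i) Bset)
    (hcardA : ∀ i : Fin m, τ - 1 ≤ (A i).card)
    (hcardB : 2 * τ - 1 ≤ Bset.card)
    (hstoredA : ∀ i : Fin m, ∀ ℓ ∈ A i, ∃ o : Fin n, f o = some ℓ)
    (hstoredB : ∀ ℓ ∈ Bset, ∃ o : Fin n, f o = some ℓ) :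
    τ + (τ - 1) * (m + 1) ≤ n := by
  classical
  set S : Finset Label := Bset ∪ Finset.univ.biUnion A with hS
  have hstored : ∀ ℓ ∈ S, ∃ o : Fin n, f o = some ℓ := by
    intro ℓ hℓ
    simp only [hS, Finset.mem_union, Finset.mem_biUnion, Finset.mem_univ, true_and] at hℓ
    rcases hℓ with h | ⟨i, hi⟩
    · exact hstoredB ℓ h
    · exact hstoredA i ℓ hi
  have hSn : S.card ≤ n := by
    have hsub : S.image (fun ℓ => (some ℓ : Option Label)) ⊆ Finset.univ.image f := by
      intro x hx
      simp only [Finset.mem_image] at hx ⊢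
      obtain ⟨ℓ, hℓ, rfl⟩ := hx
      obtain ⟨o, ho⟩ := hstored ℓ hℓ
      exact ⟨o, Finset.mem_univ o, ho⟩
    calc S.card = (S.image (fun ℓ => (some ℓ : Option Label))).card := by
          rw [Finset.card_image_of_injective _ (Option.some_injective _)]
      _ ≤ (Finset.univ.image f).card := Finset.card_le_card hsub
      _ ≤ (Finset.univ : Finset (Fin n)).card := Finset.card_image_le
      _ = n := Finset.card_univ.trans (Fintype.card_fin n)
  have hbi : (Finset.univ.biUnion A).card = ∑ i, (A i).card :=
    Finset.card_biUnion (fun i _ j _ hij => hdisj i j hij)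
  have hdisjS : Disjoint Bset (Finset.univ.biUnion A) := by
    rw [Finset.disjoint_biUnion_right]
    exact fun i _ => (hdisjB i).symm
  have hScard : S.card = Bset.card + ∑ i, (A i).card := by
    rw [hS, Finset.card_union_of_disjoint hdisjS, hbi]
  have hsum : m * (τ - 1) ≤ ∑ i, (A i).card := by
    calc m * (τ - 1) = ∑ _i : Fin m, (τ - 1) := by
          simp [Finset.sum_const, mul_comm]
      _ ≤ ∑ i, (A i).card := Finset.sum_le_sum (fun i _ => hcardA i)
  have hmul : (τ - 1) * (m + 1) = m * (τ - 1) + (τ - 1) := by ring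
  omega
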